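/- Let 0 ≤ f < n and consider any execution of Algorithm M with at most f crashed players in which at least one player decides, and let δ be the maximum value decided in that execution. Let i ∈ {1,…,f}, and let m be the maximum value of the variable Y over all members of committee C_i that are alive in round i+1, taken at the start of round i+1; suppose m ≥ δ. Then every player alive in round i+1 has Y ≤ m at the start of round i+1. -/
import Mathlib


open Finset

/-- An adversary crashing at most `f` of the `n` players: each crashed player
gets a crash round (`≥ 1`) and, for its crash round, a choice of which of its
messages are delivered. -/
structure Adversary (n f : ℕ) where
  crashRound : Fin n → Option ℕ
  delivered : Fin n → Fin n → Prop
  card_crash_le : (Finset.univ.filter fun p => (crashRound p).isSome).card ≤ f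
  one_le_crash : ∀ p r, crashRound p = some r → 1 ≤ r

namespace Adversary
variable {n f : ℕ}

/-- `p` is alive in round `r`: it does not crash in any round `< r`. -/
def Alive (A : Adversary n f) (p : Fin n) (r : ℕ) : Prop :=
  ∀ r', A.crashRound p = some r' → r ≤ r'

/-- `p` never crashes. -/
def NonFaulty (A : Adversary n f) (p : Fin n) : Prop := A.crashRound p = none

/-- A message that `p` is prescribed to send to `q` in round `r` actually
arrives (provided `q` is awake): `p` must be alive in round `r`, and if `r` is
`p`'s crash round, the adversary must have chosen to deliver this message. -/
def Arrives (A : Adversary n f) (p q : Fin n) (r : ℕ) : Prop :=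
  A.Alive p r ∧ (A.crashRound p = some r → A.delivered p q)

end Adversary

/-- Committee `C d` of the `JoinCommittees a b` assignment on `n` players:
player `i % n` joins committee `C ⌈i/b⌉` for each `1 ≤ i ≤ a * b`, so that
`C d = {i % n : (d-1)*b < i ≤ d*b, i ≤ a*b}`. -/
def committee (n : ℕ) (hn : 0 < n) (a b d : ℕ) : Finset (Fin n) :=
  ((Finset.Ioc ((d - 1) * b) (d * b)).filter fun i => i ≤ a * b).image
    fun i => ⟨i % n, Nat.mod_lt i hn⟩

variable {n : ℕ}

/-- In Algorithm M (with committees `C 1, …, C f` of size `f+1`), `q` is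
prescribed to send its current value to `p` in round `r`. -/
def SendToM (hn : 0 < n) (f : ℕ) (q p : Fin n) (r : ℕ) : Prop :=
  (r = 1 ∧ p ∈ committee n hn f (f + 1) 1) ∨
  (2 ≤ r ∧ r ≤ f ∧ q ∈ committee n hn f (f + 1) (r - 1) ∧
    p ∈ committee n hn f (f + 1) r) ∨
  (r = f + 1 ∧ q ∈ committee n hn f (f + 1) f)

open scoped Classical in
/-- `execM hn f X A r p` is the value of player `p`'s variable `Y` at the end
of round `r` (equivalently, at the start of round `r+1`); `r = 0` gives the
initial state `Y = X p`.  In round `r`, an alive player updates `Y` to the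
maximum of `Y` and all values it receives. -/
noncomputable def execM (hn : 0 < n) (f : ℕ) (X : Fin n → ℤ) (A : Adversary n f) :
    ℕ → Fin n → ℤ
  | 0 => X
  | r + 1 => fun p =>
      if A.Alive p (r + 1) then
        (Finset.univ.filter fun q =>
            SendToM hn f q p (r + 1) ∧ A.Arrives q p (r + 1)).fold
          max (execM hn f X A r p) (execM hn f X A r)
      else execM hn f X A r p

/-- Player `p` decides (at the end of round `f+1`) on the value `v`:
`p` survives all of rounds `1, …, f+1` and its variable `Y` equals `v` then. -/
def DecidesM (hn : 0 < n) (f : ℕ) (X : Fin n → ℤ) (A : Adversary n f)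
    (p : Fin n) (v : ℤ) : Prop :=
  A.Alive p (f + 2) ∧ execM hn f X A (f + 1) p = v

/-- The rounds in which player `p` is prescribed to be awake in Algorithm M. -/
def AwakeM (hn : 0 < n) (f : ℕ) (p : Fin n) (r : ℕ) : Prop :=
  r = 1 ∨ r = f + 1 ∨
    (2 ≤ r ∧ r ≤ f ∧
      (p ∈ committee n hn f (f + 1) (r - 1) ∨ p ∈ committee n hn f (f + 1) r))

open scoped Classical in
/-- The number of rounds in which player `p` is awake in Algorithm M. -/
noncomputable def awakeCountM (hn : 0 < n) (f : ℕ) (p : Fin n) : ℕ :=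
  ((Finset.Icc 1 (f + 1)).filter fun r => AwakeM hn f p r).card

open scoped Classical in
/-- The total number of messages sent in an execution of Algorithm M:
a message is sent for every round `r ∈ [1, f+1]` and every pair `(q, p)` such
that `q` is alive in round `r` and prescribed to send to `p` in round `r`. -/
noncomputable def msgCountM (hn : 0 < n) (f : ℕ) (A : Adversary n f) : ℕ :=
  ∑ r ∈ Finset.Icc 1 (f + 1),
    (Finset.univ.filter fun qp : Fin n × Fin n =>
      A.Alive qp.1 r ∧ SendToM hn f qp.1 qp.2 r).card

section Aux

lemma Adversary.Alive.mono' {f : ℕ} {A : Adversary n f} {p : Fin n} {r s : ℕ}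
    (h : A.Alive p s) (hrs : r ≤ s) : A.Alive p r :=
  fun r' hr' => le_trans hrs (h r' hr')

lemma committee_card_aux (hn : 0 < n) {f d : ℕ} (hfn : f < n) (hd1 : 1 ≤ d)
    (hdf : d ≤ f) : (committee n hn f (f + 1) d).card = f + 1 := by
  unfold committee
  have hfilter : ((Finset.Ioc ((d - 1) * (f + 1)) (d * (f + 1))).filter
      fun i => i ≤ f * (f + 1)) = Finset.Ioc ((d - 1) * (f + 1)) (d * (f + 1)) := by
    apply Finset.filter_true_of_mem
    intro i hi
    rw [Finset.mem_Ioc] at hi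
    exact le_trans hi.2 (Nat.mul_le_mul_right _ hdf)
  have hlen : (d - 1) * (f + 1) + (f + 1) = d * (f + 1) := by
    cases d with
    | zero => omega
    | succ d => simp [Nat.succ_sub_one, Nat.succ_mul]
  rw [hfilter, Finset.card_image_of_injOn, Nat.card_Ioc]
  · omega
  · intro a ha b hb hab
    rw [Finset.mem_coe, Finset.mem_Ioc] at ha hb
    have h1 : a % n = b % n := by simpa [Fin.ext_iff] using hab
    rcases le_total a b with h | h
    · have hdvd : n ∣ b - a := (Nat.modEq_iff_dvd' h).mp h1
      have : b - a = 0 := Nat.eq_zero_of_dvd_of_lt hdvd (by omega) |>.symm ▸ rfl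
      omega
    · have hdvd : n ∣ a - b := (Nat.modEq_iff_dvd' h).mp h1.symm
      have : a - b = 0 := Nat.eq_zero_of_dvd_of_lt hdvd (by omega) |>.symm ▸ rfl
      omega

lemma exists_nonfaulty_mem (hn : 0 < n) {f d : ℕ} (A : Adversary n f) (hfn : f < n)
    (hd1 : 1 ≤ d) (hdf : d ≤ f) :
    ∃ q ∈ committee n hn f (f + 1) d, A.NonFaulty q := by
  classical
  by_contra h
  push_neg at h
  have hsub : committee n hn f (f + 1) d ⊆
      Finset.univ.filter fun p => (A.crashRound p).isSome := by
    intro q hq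
    simp only [Finset.mem_filter, Finset.mem_univ, true_and]
    have hq' := h q hq
    unfold Adversary.NonFaulty at hq'
    cases hcr : A.crashRound q with
    | none => exact absurd hcr hq'
    | some r => simp
  have hcard := Finset.card_le_card hsub
  rw [committee_card_aux hn hfn hd1 hdf] at hcard
  have := A.card_crash_le
  omega

lemma le_execM_succ {f : ℕ} (hn : 0 < n) {X : Fin n → ℤ} {A : Adversary n f}
    {p q : Fin n} {r : ℕ} (hp : A.Alive p (r + 1)) (hs : SendToM hn f q p (r + 1))
    (ha : A.Arrives q p (r + 1)) :
    execM hn f X A r q ≤ execM hn f X A (r + 1) p := by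
  classical
  rw [execM]
  beta_reduce
  rw [if_pos hp]
  rw [Finset.le_fold_max]
  right
  refine ⟨q, ?_, le_rfl⟩
  simp only [Finset.mem_filter, Finset.mem_univ, true_and]
  exact ⟨hs, ha⟩

lemma execM_succ_eq_of_notMem {f : ℕ} (hn : 0 < n) {X : Fin n → ℤ}
    {A : Adversary n f} {p : Fin n} {r : ℕ} (hrf : r + 1 ≤ f)
    (hp : p ∉ committee n hn f (f + 1) (r + 1)) :
    execM hn f X A (r + 1) p = execM hn f X A r p := by
  classical
  have hempty : (Finset.univ.filter fun q =>
      SendToM hn f q p (r + 1) ∧ A.Arrives q p (r + 1)) = ∅ := by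
    rw [Finset.eq_empty_iff_forall_notMem]
    intro q hq
    simp only [Finset.mem_filter, Finset.mem_univ, true_and] at hq
    obtain ⟨hsend, _⟩ := hq
    rcases hsend with ⟨h1, hc⟩ | ⟨_, _, _, hc⟩ | ⟨h1, _⟩
    · exact hp (by rw [h1]; exact hc)
    · exact hp hc
    · omega
  rw [execM]
  beta_reduce
  rw [hempty]
  simp [Finset.fold_empty]

end Aux

/-- Lemma `max`.  Let `0 ≤ f < n` and consider an execution
of Algorithm M with at most `f` crashes in which at least one player decides;
let `δ` be the maximum decided value.  Let `i ∈ [1, f]` and let `m` be the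
maximum value of `Y` at the start of round `i+1` over the members of committee
`C i` that are alive in round `i+1`; suppose `m ≥ δ`.  Then every player alive
in round `i+1` has `Y ≤ m` at the start of round `i+1`. -/
theorem algorithmM_max (n f : ℕ) (hn : 0 < n) (hf : f < n)
    (X : Fin n → ℤ) (A : Adversary n f) (δ : ℤ)
    (hδ_dec : ∃ p, DecidesM hn f X A p δ)
    (hδ_max : ∀ p v, DecidesM hn f X A p v → v ≤ δ)
    (i : ℕ) (hi1 : 1 ≤ i) (hif : i ≤ f) (m : ℤ)
    (hm_mem : ∃ q ∈ committee n hn f (f + 1) i,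
      A.Alive q (i + 1) ∧ execM hn f X A i q = m)
    (hm_max : ∀ q ∈ committee n hn f (f + 1) i,
      A.Alive q (i + 1) → execM hn f X A i q ≤ m)
    (hδm : δ ≤ m) :
    ∀ p : Fin n, A.Alive p (i + 1) → execM hn f X A i p ≤ m := by
  classical
  intro p hp
  by_contra hv
  push_neg at hv
  -- `forward`: if all alive members of `C h` hold a value `≥ execM i p`, then
  -- propagating up to `C i` contradicts `hm_max` (since `execM i p > m`).
  have forward : ∀ k h, 1 ≤ h → h + k = i →
      (∀ q ∈ committee n hn f (f + 1) h, A.Alive q (h + 1) →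
        execM hn f X A i p ≤ execM hn f X A h q) → False := by
    intro k
    induction k with
    | zero =>
      intro h h1 hk I
      have hhi : h = i := by omega
      subst hhi
      obtain ⟨q, hq, hqa, hqm⟩ := hm_mem
      have h1' := I q hq hqa
      rw [hqm] at h1'
      exact absurd h1' (not_le.mpr hv)
    | succ k ih =>
      intro h h1 hk I
      obtain ⟨q0, hq0, hq0nf⟩ :=
        exists_nonfaulty_mem hn A hf h1 (by omega)
      have hq0a : ∀ s, A.Alive q0 s := by
        intro s r' hr'
        rw [hq0nf] at hr'
        cases hr'
      refine ih (h + 1) (by omega) (by omega) ?_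
      intro q hq hqa
      have hsend : SendToM hn f q0 q (h + 1) :=
        Or.inr (Or.inl ⟨by omega, by omega, hq0, hq⟩)
      have harr : A.Arrives q0 q (h + 1) := by
        refine ⟨hq0a _, fun hc => ?_⟩
        rw [hq0nf] at hc
        cases hc
      have hqa' : A.Alive q (h + 1) := hqa.mono' (by omega)
      calc execM hn f X A i p ≤ execM hn f X A h q0 := I q0 hq0 (hq0a _)
        _ ≤ execM hn f X A (h + 1) q := le_execM_succ hn hqa' hsend harr
  -- `backward`: trace the value of `p` back in time.
  have backward : ∀ j, j ≤ i → execM hn f X A j p = execM hn f X A i p → False := by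
    intro j
    induction j with
    | zero =>
      intro _ h0
      refine forward (i - 1) 1 le_rfl (by omega) ?_
      intro q hq hqa
      have hsend : SendToM hn f p q 1 := Or.inl ⟨rfl, hq⟩
      have harr : A.Arrives p q 1 :=
        ⟨hp.mono' (by omega), fun hc => absurd (hp 1 hc) (by omega)⟩
      have hqa1 : A.Alive q 1 := hqa.mono' (by omega)
      have hle : execM hn f X A 0 p ≤ execM hn f X A 1 q :=
        le_execM_succ hn hqa1 hsend harr
      rw [h0] at hle
      exact hle
    | succ j ihj =>
      intro hji hje
      by_cases hmem : p ∈ committee n hn f (f + 1) (j + 1)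
      · by_cases hij : j + 1 = i
        · subst hij
          exact absurd (hm_max p hmem hp) (not_le.mpr hv)
        · refine forward (i - (j + 2)) (j + 2) (by omega) (by omega) ?_
          intro q hq hqa
          have hsend : SendToM hn f p q (j + 2) :=
            Or.inr (Or.inl ⟨by omega, by omega, hmem, hq⟩)
          have harr : A.Arrives p q (j + 2) :=
            ⟨hp.mono' (by omega), fun hc => absurd (hp _ hc) (by omega)⟩
          have hqa' : A.Alive q (j + 2) := hqa.mono' (by omega)
          have hle : execM hn f X A (j + 1) p ≤ execM hn f X A (j + 2) q :=
            le_execM_succ hn hqa' hsend harr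
          rw [hje] at hle
          exact hle
      · have heq := execM_succ_eq_of_notMem hn (A := A) (X := X)
          (r := j) (by omega) hmem
        exact ihj (by omega) (by rw [← heq]; exact hje)
  exact backward i le_rfl rfl
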